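/- The top Rauzy move R_t preserves irreducibility: if π = (π_t, π_b) is an irreducible labeled permutation on an alphabet of size d with π_b(π_t⁻¹(d)) ≤ d−1, then R_t(π) is irreducible. -/
import Mathlib

structure LabeledPerm (A : Type*) (d : ℕ) where
  t : A ≃ Fin d
  b : A ≃ Fin d

def LabeledPerm.Irreducible {A : Type*} {d : ℕ} (π : LabeledPerm A d) : Prop :=
  ∀ k : ℕ, 0 < k → k < d → {a : A | (π.t a).val < k} ≠ {a : A | (π.b a).val < k}

def rtBotInv {A : Type*} {d : ℕ} (hd : 0 < d) (π : LabeledPerm A d) : Fin d → A :=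
  let last : Fin d := ⟨d - 1, by omega⟩
  let k : ℕ := (π.b (π.t.symm last)).val
  fun j =>
    if j.val ≤ k then π.b.symm j
    else if j.val = k + 1 then π.b.symm last
    else π.b.symm ⟨j.val - 1, Nat.lt_of_le_of_lt (Nat.sub_le _ _) j.isLt⟩

/-- The top Rauzy move preserves irreducibility: if `π` is irreducible with
`k = π_b(π_t⁻¹(d)) ≤ d−1`, and `π'` is the labeled permutation with the same top row and with
bottom row given by the move `R_t`, then `π'` is irreducible. -/
theorem stmt_11 {A : Type*} {d : ℕ} (hd : 2 ≤ d) (π : LabeledPerm A d)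
    (hirr : π.Irreducible)
    (hk : (π.b (π.t.symm ⟨d - 1, by omega⟩)).val + 1 ≤ d - 1)
    (π' : LabeledPerm A d) (ht : π'.t = π.t)
    (hb : ⇑π'.b.symm = rtBotInv (by omega) π) :
    π'.Irreducible := by
  have hd0 : 0 < d := by omega
  set last : Fin d := ⟨d - 1, by omega⟩ with hlast
  set k : ℕ := (π.b (π.t.symm last)).val with hkdef
  have hkd : k < d := (π.b (π.t.symm last)).isLt
  -- key: for positions j ≤ k, the bottom letter is unchanged
  have h1 : ∀ j : Fin d, j.val ≤ k → π'.b.symm j = π.b.symm j := by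
    intro j hj
    rw [hb]
    simp only [rtBotInv]
    rw [if_pos hj]
  intro m hm0 hmd
  by_cases hcase : m ≤ k
  · have key : ∀ a : A, (π'.b a).val < m ↔ (π.b a).val < m := by
      intro a
      constructor
      · intro h
        have ha : π.b.symm (π'.b a) = a := by
          rw [← h1 (π'.b a) (by omega)]; exact π'.b.symm_apply_apply a
        have : π'.b a = π.b a := by simpa using congrArg π.b ha
        omega
      · intro h
        have ha : π'.b.symm (π.b a) = a := by
          rw [h1 (π.b a) (by omega)]; exact π.b.symm_apply_apply a
        have : π.b a = π'.b a := by simpa using congrArg π'.b ha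
        omega
    have hne := hirr m hm0 hmd
    rw [ht]
    intro heq
    apply hne
    rw [heq]
    ext a
    simp only [Set.mem_setOf_eq]
    exact key a
  · -- k < m < d : the letter π.t.symm last distinguishes the sets
    have hbk : π'.b (π.t.symm last) = ⟨k, hkd⟩ := by
      have : π'.b.symm ⟨k, hkd⟩ = π.t.symm last := by
        rw [h1 ⟨k, hkd⟩ le_rfl]
        have hke : (⟨k, hkd⟩ : Fin d) = π.b (π.t.symm last) := rfl
        rw [hke, π.b.symm_apply_apply]
      rw [← this, π'.b.apply_symm_apply]
    intro heq
    have htop : π.t.symm last ∈ {a : A | (π'.t a).val < m} ↔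
        π.t.symm last ∈ {a : A | (π'.b a).val < m} := by rw [heq]
    simp only [Set.mem_setOf_eq, ht, π.t.apply_symm_apply, hbk] at htop
    have hld : last.val = d - 1 := rfl
    omega
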